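/- Let n ≥ 1, let B be a nonnegative irreducible n×n real matrix, and let D be a diagonal n×n real matrix with all diagonal entries strictly positive. Then λ_max(B − D) = 0 if and only if λ_max(D^{-1} B) = 1. -/

import Mathlib

/-!
Both directions rest on a Collatz–Wielandt bound for a real matrix `J` with nonnegative
off-diagonal entries: if `J w = g • w` entrywise for a real `w ≠ 0`, then `|w|` is subinvariant,
`(min g) • |w| ≤ J |w|`, and `J` has an eigenvalue with real part at least `min g`. Indeed
`J + s` is nonnegative for large `s`, so by Gelfand's formula it has an eigenvalue `z + s` of
modulus at least `min g + s`, where `z` is an eigenvalue of `J`; and an eigenvalue `z` with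
`Re z < min g` has `‖z + s‖ < min g + s` once `s` is large.

The eigen-relations of `B - D` and `D⁻¹ B` are rescalings of each other, so this bound, applied
to the real eigenvectors of both, gives `l0 / D i i ≤ l1 - 1` and `(l1 - 1) D j j ≤ l0`:
`l0` and `l1 - 1` have the same sign.
-/

/-- `l0` is the dominant (Perron–Frobenius) eigenvalue of the real matrix `J`:
it is a real eigenvalue of `J` and every complex eigenvalue `lam` of `J`
(i.e. root of the characteristic polynomial over `ℂ`) satisfies `lam.re ≤ l0`. -/
def IsLamMax {n : ℕ} (J : Matrix (Fin n) (Fin n) ℝ) (l0 : ℝ) : Prop :=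
  (∃ Z : Fin n → ℝ, Z ≠ 0 ∧ J.mulVec Z = l0 • Z) ∧
  ∀ lam : ℂ, (Polynomial.aeval lam) J.charpoly = 0 → lam.re ≤ l0

open Matrix Polynomial Filter Finset

theorem Complex.eventually_norm_add_ofReal_lt {z : ℂ} {γ : ℝ} (hz : z.re < γ) :
    ∀ᶠ s : ℝ in atTop, ‖z + s‖ < γ + s := by
  filter_upwards [eventually_gt_atTop (z.im ^ 2 / (γ - z.re) + |γ| + |z.re|)] with s hs
  have hδ : 0 < γ - z.re := sub_pos.mpr hz
  have hquot := div_nonneg (sq_nonneg z.im) hδ.le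
  have hγs : 0 < γ + s := by linarith [neg_abs_le γ, abs_nonneg z.re]
  have him : z.im ^ 2 < (γ - z.re) * (γ + z.re + 2 * s) := by
    rw [← div_lt_iff₀' hδ]
    linarith [neg_abs_le γ, neg_abs_le z.re, abs_nonneg γ, abs_nonneg z.re]
  refine lt_of_pow_lt_pow_left₀ 2 hγs.le ?_
  rw [Complex.sq_norm, Complex.normSq_apply]
  simp only [Complex.add_re, Complex.ofReal_re, Complex.add_im, Complex.ofReal_im, add_zero]
  nlinarith

namespace Matrix

variable {ι : Type*}

def IsMetzler {α : Type*} [Zero α] [LE α] (J : Matrix ι ι α) : Prop :=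
  ∀ i j, i ≠ j → 0 ≤ J i j

theorem IsDiag.mulVec_apply [Fintype ι] [DecidableEq ι] {α : Type*}
    [NonUnitalNonAssocSemiring α] {D : Matrix ι ι α} (hD : D.IsDiag) (v : ι → α) (i : ι) :
    (D *ᵥ v) i = D i i * v i := by
  conv_lhs => rw [← hD.diagonal_diag, mulVec_diagonal]
  rfl

theorem IsDiag.inv_eq_diagonal [Fintype ι] [DecidableEq ι] {K : Type*} [Field K]
    {D : Matrix ι ι K} (hD : D.IsDiag) (hD0 : ∀ i, D i i ≠ 0) :
    D⁻¹ = diagonal fun i => (D i i)⁻¹ := by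
  conv_lhs => rw [← hD.diagonal_diag]
  exact inv_eq_left_inv (by simp [diagonal_mul_diagonal, hD0])

variable [Fintype ι]

theorem mulVec_le_mulVec {A : Matrix ι ι ℝ} (hA : ∀ i j, 0 ≤ A i j) {u v : ι → ℝ}
    (huv : u ≤ v) : A *ᵥ u ≤ A *ᵥ v := fun i =>
  sum_le_sum fun j _ => mul_le_mul_of_nonneg_left (huv j) (hA i j)

theorem mul_abs_le_mulVec_abs [DecidableEq ι] {J : Matrix ι ι ℝ}
    (hJ : J.IsMetzler) {w : ι → ℝ} {g : ℝ} {i : ι} (h : (J *ᵥ w) i = g * w i) :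
    g * |w i| ≤ (J *ᵥ |w|) i := by
  have hsplit : ∀ v : ι → ℝ, (J *ᵥ v) i = J i i * v i + ∑ j ∈ univ.erase i, J i j * v j :=
    fun v => (add_sum_erase _ _ (mem_univ i)).symm
  have hoff : |∑ j ∈ univ.erase i, J i j * w j| ≤ ∑ j ∈ univ.erase i, J i j * |w j| :=
    (abs_sum_le_sum_abs _ _).trans <| sum_le_sum fun j hj => by
      rw [abs_mul, abs_of_nonneg (hJ i j (ne_of_mem_erase hj).symm)]
  rw [hsplit] at h
  rw [hsplit]
  simp only [Pi.abs_apply]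
  calc g * |w i| = J i i * |w i| + (g - J i i) * |w i| := by ring
    _ ≤ J i i * |w i| + |(g - J i i) * w i| := by
        rw [abs_mul]; gcongr; exact le_abs_self _
    _ = J i i * |w i| + |∑ j ∈ univ.erase i, J i j * w j| := by
        rw [show (g - J i i) * w i = ∑ j ∈ univ.erase i, J i j * w j by linarith]
    _ ≤ J i i * |w i| + ∑ j ∈ univ.erase i, J i j * |w j| := by gcongr

variable [DecidableEq ι]

theorem pow_smul_le_pow_mulVec {A : Matrix ι ι ℝ} (hA : ∀ i j, 0 ≤ A i j) {x : ι → ℝ}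
    {r : ℝ} (hr : 0 ≤ r) (hAx : r • x ≤ A *ᵥ x) (k : ℕ) : r ^ k • x ≤ (A ^ k) *ᵥ x := by
  induction k with
  | zero => simp
  | succ k ih =>
    calc r ^ (k + 1) • x = r ^ k • r • x := by rw [pow_succ, mul_smul]
      _ ≤ r ^ k • A *ᵥ x := smul_le_smul_of_nonneg_left hAx (pow_nonneg hr k)
      _ = A *ᵥ (r ^ k • x) := (mulVec_smul _ _ _).symm
      _ ≤ A *ᵥ ((A ^ k) *ᵥ x) := mulVec_le_mulVec hA ih
      _ = (A ^ (k + 1)) *ᵥ x := by rw [mulVec_mulVec, pow_succ']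

theorem mem_spectrum_map_algebraMap_iff (A : Matrix ι ι ℝ) (z : ℂ) :
    z ∈ spectrum ℂ (A.map (algebraMap ℝ ℂ)) ↔ aeval z A.charpoly = 0 := by
  rw [mem_spectrum_iff_isRoot_charpoly, charpoly_map, IsRoot, eval_map_algebraMap]

section LinftyOp

attribute [local instance] Matrix.linftyOpNormedRing Matrix.linftyOpNormedAlgebra

theorem pow_le_norm_map_pow {A : Matrix ι ι ℝ} (hA : ∀ i j, 0 ≤ A i j) {x : ι → ℝ}
    (hx0 : 0 ≤ x) (hx : x ≠ 0) {r : ℝ} (hr : 0 ≤ r) (hAx : r • x ≤ A *ᵥ x) (k : ℕ) :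
    r ^ k ≤ ‖(A.map (algebraMap ℝ ℂ)) ^ k‖ := by
  obtain ⟨j, hj⟩ := Function.ne_iff.mp hx
  have : Nonempty ι := ⟨j⟩
  obtain ⟨i, hi⟩ := Finite.exists_max x
  have hxi : 0 < x i := (lt_of_le_of_ne (hx0 j) (Ne.symm hj)).trans_le (hi j)
  set x' : ι → ℂ := algebraMap ℝ ℂ ∘ x
  have hx' : ‖x'‖ ≤ x i := (pi_norm_le_iff_of_nonneg hxi.le).mpr fun l => by
    simpa [x', abs_of_nonneg (hx0 l)] using hi l
  have hAk : r ^ k * x i ≤ ‖(A.map (algebraMap ℝ ℂ) ^ k *ᵥ x') i‖ := by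
    rw [← Matrix.map_pow, ← RingHom.map_mulVec, Complex.coe_algebraMap, Complex.norm_real,
      Real.norm_eq_abs]
    exact (pow_smul_le_pow_mulVec hA hr hAx k i).trans (le_abs_self _)
  have := (hAk.trans (norm_le_pi_norm _ i)).trans (linfty_opNorm_mulVec _ _)
  nlinarith [norm_nonneg ((A.map (algebraMap ℝ ℂ)) ^ k)]

theorem exists_mem_spectrum_norm_ge {A : Matrix ι ι ℝ} (hA : ∀ i j, 0 ≤ A i j) {x : ι → ℝ}
    (hx0 : 0 ≤ x) (hx : x ≠ 0) {r : ℝ} (hr : 0 ≤ r) (hAx : r • x ≤ A *ᵥ x) :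
    ∃ z ∈ spectrum ℂ (A.map (algebraMap ℝ ℂ)), r ≤ ‖z‖ := by
  obtain ⟨j, -⟩ := Function.ne_iff.mp hx
  have : Nonempty ι := ⟨j⟩
  obtain ⟨z, hz, hz_eq⟩ := spectrum.exists_nnnorm_eq_spectralRadius (A.map (algebraMap ℝ ℂ))
  refine ⟨z, hz, ?_⟩
  have hroot : ∀ k : ℕ, k ≠ 0 → r ≤ ‖(A.map (algebraMap ℝ ℂ)) ^ k‖ ^ (1 / k : ℝ) := by
    intro k hk
    calc r = (r ^ k) ^ (1 / k : ℝ) := by rw [one_div, Real.pow_rpow_inv_natCast hr hk]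
      _ ≤ _ := Real.rpow_le_rpow (pow_nonneg hr k) (pow_le_norm_map_pow hA hx0 hx hr hAx k)
          (by positivity)
  have hle : ENNReal.ofReal r ≤ spectralRadius ℂ (A.map (algebraMap ℝ ℂ)) :=
    ge_of_tendsto (spectrum.pow_norm_pow_one_div_tendsto_nhds_spectralRadius _)
      (eventually_atTop.2 ⟨1, fun k hk => ENNReal.ofReal_le_ofReal (hroot k (by omega))⟩)
  rw [← hz_eq] at hle
  simpa using (ENNReal.ofReal_le_iff_le_toReal ENNReal.coe_ne_top).mp hle

end LinftyOp

theorem exists_mem_spectrum_re_ge {J : Matrix ι ι ℝ} (hJ : J.IsMetzler)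
    {x : ι → ℝ} (hx0 : 0 ≤ x) (hx : x ≠ 0) {γ : ℝ} (hJx : γ • x ≤ J *ᵥ x) :
    ∃ z ∈ spectrum ℂ (J.map (algebraMap ℝ ℂ)), γ ≤ z.re := by
  by_contra! h
  have hnorm : ∀ᶠ s : ℝ in atTop,
      ∀ z ∈ spectrum ℂ (J.map (algebraMap ℝ ℂ)), ‖z + s‖ < γ + s :=
    (Matrix.finite_spectrum _).eventually_all.2 fun z hz =>
      Complex.eventually_norm_add_ofReal_lt (h z hz)
  have hdiag : ∀ᶠ s : ℝ in atTop, ∀ i, -J i i ≤ s :=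
    eventually_all.2 fun i => eventually_ge_atTop _
  obtain ⟨s, hs_norm, hs_diag, hs_γ⟩ := (hnorm.and (hdiag.and (eventually_ge_atTop (-γ)))).exists
  set A := J + algebraMap ℝ (Matrix ι ι ℝ) s
  have hA : ∀ i j, 0 ≤ A i j := by
    intro i j
    by_cases hij : i = j
    · subst hij
      simpa [A, algebraMap_matrix_apply] using (by linarith [hs_diag i] : 0 ≤ J i i + s)
    · simpa [A, algebraMap_matrix_apply, hij] using hJ i j hij
  have hAx : (γ + s) • x ≤ A *ᵥ x := by
    rw [add_mulVec, Algebra.algebraMap_eq_smul_one, smul_mulVec, one_mulVec, add_smul]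
    exact add_le_add_left hJx _
  obtain ⟨z, hz, hz_norm⟩ := exists_mem_spectrum_norm_ge hA hx0 hx (by linarith) hAx
  have hmap : A.map (algebraMap ℝ ℂ) = J.map (algebraMap ℝ ℂ) + algebraMap ℂ _ (s : ℂ) := by
    rw [Matrix.map_add _ (map_add _), Matrix.map_algebraMap _ _ (map_zero _) rfl,
      IsScalarTower.algebraMap_apply ℝ ℂ (Matrix ι ι ℂ)]
    rfl
  rw [hmap, ← spectrum.add_singleton_eq] at hz
  obtain ⟨w, hw, _, rfl, rfl⟩ := hz
  exact (hs_norm w hw).not_ge hz_norm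

theorem exists_le_of_mulVec_eq_mul {J : Matrix ι ι ℝ} (hJ : J.IsMetzler) {l : ℝ}
    (hl : ∀ z : ℂ, aeval z J.charpoly = 0 → z.re ≤ l) {w : ι → ℝ} (hw : w ≠ 0) {g : ι → ℝ}
    (h : ∀ i, (J *ᵥ w) i = g i * w i) : ∃ i, g i ≤ l := by
  by_contra! hgl
  obtain ⟨j, -⟩ := Function.ne_iff.mp hw
  have : Nonempty ι := ⟨j⟩
  obtain ⟨i₀, hi₀⟩ := Finite.exists_min g
  have hsub : g i₀ • |w| ≤ J *ᵥ |w| := fun i =>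
    (mul_le_mul_of_nonneg_right (hi₀ i) (abs_nonneg _)).trans (mul_abs_le_mulVec_abs hJ (h i))
  obtain ⟨z, hz, hz_re⟩ :=
    exists_mem_spectrum_re_ge hJ (abs_nonneg w) (mt (Pi.abs_eq_zero w).mp hw) hsub
  exact (hgl i₀).not_ge (hz_re.trans (hl z ((mem_spectrum_map_algebraMap_iff J z).mp hz)))

end Matrix

theorem stmt_14_general {n : ℕ}
    (B D : Matrix (Fin n) (Fin n) ℝ)
    (hBnn : ∀ i j, 0 ≤ B i j)
    (hDdiag : D.IsDiag) (hDpos : ∀ i, 0 < D i i)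
    (l0 l1 : ℝ)
    (hl0 : IsLamMax (B - D) l0)
    (hl1 : IsLamMax (D⁻¹ * B) l1) :
    l0 = 0 ↔ l1 = 1 := by
  have hinv := hDdiag.inv_eq_diagonal fun i => (hDpos i).ne'
  have hBD : ∀ v i, ((B - D) *ᵥ v) i = (B *ᵥ v) i - D i i * v i := fun v i => by
    rw [sub_mulVec, Pi.sub_apply, hDdiag.mulVec_apply]
  have hDB : ∀ v i, ((D⁻¹ * B) *ᵥ v) i = (D i i)⁻¹ * (B *ᵥ v) i := fun v i => by
    rw [hinv, ← mulVec_mulVec, mulVec_diagonal]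
  have hBD_metzler : (B - D).IsMetzler := fun i j hij => by simpa [hDdiag hij] using hBnn i j
  have hDB_metzler : (D⁻¹ * B).IsMetzler := fun i j _ => by
    rw [hinv, diagonal_mul]
    exact mul_nonneg (inv_nonneg.2 (hDpos i).le) (hBnn i j)
  obtain ⟨Z, hZ, hZeq⟩ := hl0.1
  obtain ⟨W, hW, hWeq⟩ := hl1.1
  obtain ⟨i, hi⟩ := exists_le_of_mulVec_eq_mul hDB_metzler hl1.2 hZ
    (g := fun i => 1 + l0 / D i i) fun i => by
      have hZi : (B *ᵥ Z) i = l0 * Z i + D i i * Z i := by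
        simpa [hBD, sub_eq_iff_eq_add] using congrFun hZeq i
      rw [hDB, hZi]
      field_simp [(hDpos i).ne']
      ring
  obtain ⟨j, hj⟩ := exists_le_of_mulVec_eq_mul hBD_metzler hl0.2 hW
    (g := fun j => (l1 - 1) * D j j) fun j => by
      have hWj : (B *ᵥ W) j = D j j * (l1 * W j) := by
        simpa [hDB, inv_mul_eq_iff_eq_mul₀ (hDpos j).ne'] using congrFun hWeq j
      rw [hBD, hWj]
      ring
  have hi' : l0 ≤ (l1 - 1) * D i i := by
    rwa [add_comm, ← le_sub_iff_add_le, div_le_iff₀ (hDpos i)] at hi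
  constructor <;> rintro rfl <;> nlinarith [hDpos i, hDpos j]

/-- For `B` nonnegative irreducible and `D` diagonal with strictly positive diagonal
entries, `λ_max(B - D) = 0` if and only if the Perron root of `D⁻¹ B` equals `1`. -/
theorem stmt_14 {n : ℕ} (hn : 1 ≤ n)
    (B D : Matrix (Fin n) (Fin n) ℝ)
    (hBnn : ∀ i j, 0 ≤ B i j)
    (hBirr : ∀ i j, ∃ k : ℕ, 0 < k ∧ 0 < (B ^ k) i j)
    (hDdiag : D.IsDiag) (hDpos : ∀ i, 0 < D i i)
    (l0 l1 : ℝ)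
    (hl0 : IsLamMax (B - D) l0)
    (hl1 : IsLamMax (D⁻¹ * B) l1) :
    l0 = 0 ↔ l1 = 1 :=
  stmt_14_general B D hBnn hDdiag hDpos l0 l1 hl0 hl1
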